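/- Let σ_θ = |ψ_θ⟩⟨ψ_θ| with ψ_θ = (|0⟩ + e^{iθ}|1⟩)/√2, θ ∈ (α, β) a bounded open interval. For any measurable space (Ω, Σ), any POVM N: Σ → M₂(ℂ), and any N-integrable function θ̂: Ω → ℝ, it is impossible that ∫_Ω θ̂ dP^N_{σ_θ} = θ for all θ ∈ (α, β), where P^N_{σ_θ}(A) = tr[σ_θ N(A)]. That is, no unbiased estimator of θ exists for any measurement. -/

import Mathlib

open scoped ComplexOrder

/-- The pure clock state `σ_θ = |ψ_θ⟩⟨ψ_θ|` with `ψ_θ = (|0⟩ + e^{iθ}|1⟩)/√2`. -/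
noncomputable def sigmaPure (θ : ℝ) : Matrix (Fin 2) (Fin 2) ℂ :=
  (1/2 : ℂ) • !![1, Complex.exp (-Complex.I * (θ : ℂ));
                 Complex.exp (Complex.I * (θ : ℂ)), 1]

/-!
For every matrix `M`, `θ ↦ re tr(σ_θ M)` has the form `a + b cos θ + c sin θ`, and every such
function satisfies `f(m - 2h) + 2 cos h · f(m + h) = 2 cos h · f(m - h) + f(m + 2h)`. Hence the
outcome measures obey the same relation (all coefficients are nonnegative for small `h`, so it
holds between measures), and integrating `θ̂` against it shows that the mean `θ ↦ E_θ[θ̂]` obeys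
it too. The identity `θ ↦ θ` does not: it would give `4h = 4h cos h`.
-/

open Real MeasureTheory Matrix

theorem sigmaPure_eq_smul_vecMulVec (θ : ℝ) :
    sigmaPure θ = (1 / 2 : ℂ) • vecMulVec ![1, Complex.exp (Complex.I * θ)]
      (star ![1, Complex.exp (Complex.I * θ)]) := by
  have hstar : star ![1, Complex.exp (Complex.I * θ)] = ![1, Complex.exp (-Complex.I * θ)] := by
    ext i
    fin_cases i <;> simp [← Complex.exp_conj]
  ext i j
  rw [hstar, Matrix.smul_apply, vecMulVec_apply]
  fin_cases i <;> fin_cases j <;> simp [sigmaPure, ← Complex.exp_add]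

theorem re_trace_sigmaPure_mul (θ : ℝ) (M : Matrix (Fin 2) (Fin 2) ℂ) :
    (sigmaPure θ * M).trace.re = ((M 0 0).re + (M 1 1).re) / 2
      + ((M 0 1).re + (M 1 0).re) / 2 * cos θ + ((M 1 0).im - (M 0 1).im) / 2 * sin θ := by
  rw [sigmaPure_eq_smul_vecMulVec, smul_mul_assoc, trace_smul, trace_mul_comm, mul_vecMulVec,
    trace_vecMulVec, mul_comm Complex.I, Complex.exp_mul_I, ← Complex.ofReal_cos,
    ← Complex.ofReal_sin]
  simp [dotProduct, mulVec, Fin.sum_univ_two, Complex.cos_ofReal_re, Complex.sin_ofReal_re]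
  linear_combination (M 1 1).re / 2 * sin_sq_add_cos_sq θ

theorem re_trace_sigmaPure_mul_nonneg (θ : ℝ) {M : Matrix (Fin 2) (Fin 2) ℂ}
    (hM : M.PosSemidef) : 0 ≤ (sigmaPure θ * M).trace.re := by
  rw [sigmaPure_eq_smul_vecMulVec, smul_mul_assoc, trace_smul, trace_mul_comm, mul_vecMulVec,
    trace_vecMulVec, dotProduct_comm]
  have := Complex.le_def.mp (hM.dotProduct_mulVec_nonneg ![1, Complex.exp (Complex.I * θ)])
  simpa [Complex.smul_re] using this.1

theorem four_point_relation_of_eq_cos_sin {f : ℝ → ℝ} {a b c : ℝ}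
    (hf : ∀ θ, f θ = a + b * cos θ + c * sin θ) (m h : ℝ) :
    f (m - 2 * h) + 2 * cos h * f (m + h) = 2 * cos h * f (m - h) + f (m + 2 * h) := by
  simp only [hf, cos_add, cos_sub, sin_add, sin_sub, cos_two_mul, sin_two_mul]
  ring

theorem integral_add_smul_eq_of_measure_add_smul_eq {Ω : Type*} [MeasurableSpace Ω]
    {μ₁ μ₂ μ₃ μ₄ : Measure Ω} {c : ℝ} (hc : 0 ≤ c) {E : Type*} [NormedAddCommGroup E]
    [NormedSpace ℝ E] {f : Ω → E} (h₁ : Integrable f μ₁) (h₂ : Integrable f μ₂)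
    (h₃ : Integrable f μ₃) (h₄ : Integrable f μ₄)
    (h : μ₁ + ENNReal.ofReal c • μ₂ = ENNReal.ofReal c • μ₃ + μ₄) :
    ∫ ω, f ω ∂μ₁ + c • ∫ ω, f ω ∂μ₂ = c • ∫ ω, f ω ∂μ₃ + ∫ ω, f ω ∂μ₄ := by
  have hc' : ENNReal.ofReal c ≠ ⊤ := ENNReal.ofReal_ne_top
  have := congrArg (fun μ => ∫ ω, f ω ∂μ) h
  simpa only [integral_add_measure h₁ (h₂.smul_measure hc'),
    integral_add_measure (h₃.smul_measure hc') h₄, integral_smul_measure,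
    ENNReal.toReal_ofReal hc] using this

theorem outcome_measure_four_point_relation {Ω : Type*} [MeasurableSpace Ω]
    {N : Set Ω → Matrix (Fin 2) (Fin 2) ℂ} (hpos : ∀ s, MeasurableSet s → (N s).PosSemidef)
    {P : ℝ → Measure Ω}
    (hP : ∀ θ s, MeasurableSet s → P θ s = ENNReal.ofReal ((sigmaPure θ * N s).trace.re))
    (m : ℝ) {h : ℝ} (hh : 0 ≤ cos h) :
    P (m - 2 * h) + ENNReal.ofReal (2 * cos h) • P (m + h)
      = ENNReal.ofReal (2 * cos h) • P (m - h) + P (m + 2 * h) := by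
  ext s hs
  have hrel := four_point_relation_of_eq_cos_sin
    (f := fun θ => (sigmaPure θ * N s).trace.re) (re_trace_sigmaPure_mul · (N s)) m h
  have hnonneg θ := re_trace_sigmaPure_mul_nonneg θ (hpos s hs)
  have hc : 0 ≤ 2 * cos h := by positivity
  simp only [Measure.add_apply, Measure.smul_apply, smul_eq_mul, hP _ s hs]
  rw [← ENNReal.ofReal_mul hc, ← ENNReal.ofReal_mul hc,
    ← ENNReal.ofReal_add (hnonneg _) (mul_nonneg hc (hnonneg _)),
    ← ENNReal.ofReal_add (mul_nonneg hc (hnonneg _)) (hnonneg _), hrel]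

theorem no_unbiased_estimator_general (α β : ℝ) (hαβ : α < β)
    (Ω : Type*) [MeasurableSpace Ω]
    (N : Set Ω → Matrix (Fin 2) (Fin 2) ℂ)
    (hpos : ∀ s : Set Ω, MeasurableSet s → (N s).PosSemidef)
    (P : ℝ → MeasureTheory.Measure Ω)
    (hP : ∀ θ : ℝ, ∀ s : Set Ω, MeasurableSet s →
      P θ s = ENNReal.ofReal ((sigmaPure θ * N s).trace.re))
    (est : Ω → ℝ)
    (hint : ∀ θ ∈ Set.Ioo α β, MeasureTheory.Integrable est (P θ)) :
    ¬ ∀ θ ∈ Set.Ioo α β, (∫ ω, est ω ∂(P θ)) = θ := by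
  intro hunbiased
  set m := (α + β) / 2 with hm
  set h := min 1 ((β - α) / 8)
  have hh_pos : 0 < h := lt_min one_pos (by linarith)
  have hh_le_one : h ≤ 1 := min_le_left _ _
  have hh_le : h ≤ (β - α) / 8 := min_le_right _ _
  have hcos_pos : 0 < cos h :=
    cos_pos_of_mem_Ioo ⟨by linarith [pi_pos], by linarith [pi_gt_three]⟩
  have hcos_lt : cos h < 1 := by
    simpa using cos_lt_cos_of_nonneg_of_le_pi le_rfl (by linarith [pi_gt_three]) hh_pos
  have h₁ : m - 2 * h ∈ Set.Ioo α β := ⟨by linarith, by linarith⟩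
  have h₂ : m - h ∈ Set.Ioo α β := ⟨by linarith, by linarith⟩
  have h₃ : m + h ∈ Set.Ioo α β := ⟨by linarith, by linarith⟩
  have h₄ : m + 2 * h ∈ Set.Ioo α β := ⟨by linarith, by linarith⟩
  have hrel := integral_add_smul_eq_of_measure_add_smul_eq (by positivity)
    (hint _ h₁) (hint _ h₃) (hint _ h₂) (hint _ h₄)
    (outcome_measure_four_point_relation hpos hP m hcos_pos.le)
  rw [hunbiased _ h₁, hunbiased _ h₂, hunbiased _ h₃, hunbiased _ h₄, smul_eq_mul,
    smul_eq_mul] at hrel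
  have hcontra : h * (1 - cos h) = 0 := by linear_combination -hrel / 4
  exact (mul_pos hh_pos (sub_pos.2 hcos_lt)).ne' hcontra

/-- No unbiased estimator of the phase `θ` exists for any measurement: for any POVM `N`
on a measurable space `Ω` (positive semidefinite valued, `N ∅ = 0`, `N Ω = I`, countably
additive) with outcome probability measures `P θ (s) = tr[σ_θ N(s)]`, there is no
`P θ`-integrable real function `θ̂` whose expectation equals `θ` for all `θ` in a
nondegenerate interval `(α, β)`. -/
theorem no_unbiased_estimator (α β : ℝ) (hαβ : α < β)
    (Ω : Type*) [MeasurableSpace Ω]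
    (N : Set Ω → Matrix (Fin 2) (Fin 2) ℂ)
    (hpos : ∀ s : Set Ω, MeasurableSet s → (N s).PosSemidef)
    (hempty : N ∅ = 0)
    (huniv : N Set.univ = 1)
    (hadd : ∀ s : ℕ → Set Ω, (∀ n, MeasurableSet (s n)) →
      Pairwise (Function.onFun Disjoint s) →
      HasSum (fun n => N (s n)) (N (⋃ n, s n)))
    (P : ℝ → MeasureTheory.Measure Ω)
    (hP : ∀ θ : ℝ, ∀ s : Set Ω, MeasurableSet s →
      P θ s = ENNReal.ofReal ((sigmaPure θ * N s).trace.re))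
    (est : Ω → ℝ)
    (hint : ∀ θ ∈ Set.Ioo α β, MeasureTheory.Integrable est (P θ)) :
    ¬ ∀ θ ∈ Set.Ioo α β, (∫ ω, est ω ∂(P θ)) = θ :=
  no_unbiased_estimator_general α β hαβ Ω N hpos P hP est hint
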